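/- arXiv:2204.05808 — 2 statements merged into one kernel-verified Lean document; each statement's English description precedes it below -/
import Mathlib

section
/- Let I be a countable set, A : I → ℝ with A(i) ≥ 1, B : I → ℝ≥0, and define P(s) = inf{r > 0 : ∑_{i∈I} A(i)^s B(i)^r < ∞} (with P(s) = +∞ if no such r exists). Then P is a convex function on the set where it is finite: for a, b ∈ ℝ with P(a), P(b) < ∞ and t ∈ [0,1], P(ta + (1-t)b) ≤ t P(a) + (1-t) P(b). -/
/-- Convexity lemma of Section 5.3: the pressure-type function
`P(s) = inf {r > 0 : ∑ A(i)^s B(i)^r < ∞}` is convex where it is finite. -/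
theorem stmt7 {I : Type*} [Countable I] (A B : I → ℝ)
    (hA : ∀ i, 1 ≤ A i) (hB : ∀ i, 0 ≤ B i)
    (P : ℝ → Set ℝ)
    (hP : ∀ s, P s = {r : ℝ | 0 < r ∧ Summable (fun i => A i ^ s * B i ^ r)})
    (a b : ℝ) (hane : (P a).Nonempty) (hbne : (P b).Nonempty)
    (t : ℝ) (ht0 : 0 ≤ t) (ht1 : t ≤ 1) :
    (P (t * a + (1 - t) * b)).Nonempty ∧
      sInf (P (t * a + (1 - t) * b)) ≤ t * sInf (P a) + (1 - t) * sInf (P b) := by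
  have ht1' : (0:ℝ) ≤ 1 - t := by linarith
  have hApos : ∀ i, (0:ℝ) < A i := fun i => lt_of_lt_of_le one_pos (hA i)
  -- key closure property
  have key : ∀ ra rb : ℝ, ra ∈ P a → rb ∈ P b →
      (t * ra + (1 - t) * rb) ∈ P (t * a + (1 - t) * b) := by
    intro ra rb hra hrb
    rw [hP] at hra hrb
    obtain ⟨hra0, hraS⟩ := hra
    obtain ⟨hrb0, hrbS⟩ := hrb
    have hr0 : 0 < t * ra + (1 - t) * rb := by
      rcases lt_or_eq_of_le ht0 with h | h
      · have h1 : 0 < t * ra := mul_pos h hra0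
        have h2 : 0 ≤ (1 - t) * rb := mul_nonneg ht1' hrb0.le
        linarith
      · have : t = 0 := h.symm
        rw [this]; simpa using hrb0
    rw [hP]
    refine ⟨hr0, ?_⟩
    refine Summable.of_nonneg_of_le (fun i => ?_) (fun i => ?_)
      ((hraS.mul_left t).add (hrbS.mul_left (1 - t)))
    · have := hApos i; have := hB i; positivity
    · have hbd : (A i ^ a * B i ^ ra) ^ t * (A i ^ b * B i ^ rb) ^ (1 - t)
          ≤ t * (A i ^ a * B i ^ ra) + (1 - t) * (A i ^ b * B i ^ rb) := by
        refine Real.geom_mean_le_arith_mean2_weighted ht0 ht1' ?_ ?_ (by ring)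
        · have := (hApos i).le; have := hB i; positivity
        · have := (hApos i).le; have := hB i; positivity
      refine le_trans (le_of_eq ?_) hbd
      rcases eq_or_lt_of_le (hB i) with hBi | hBi
      · rw [← hBi, Real.zero_rpow hr0.ne', Real.zero_rpow hra0.ne',
          Real.zero_rpow hrb0.ne', mul_zero, mul_zero, mul_zero]
        rcases eq_or_lt_of_le ht0 with h | h
        · have h1t : (1 : ℝ) - t ≠ 0 := by rw [← h]; norm_num
          rw [Real.zero_rpow h1t, mul_zero]
        · rw [Real.zero_rpow h.ne', zero_mul]
      · rw [show t * a + (1 - t) * b = a * t + b * (1 - t) by ring,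
          show t * ra + (1 - t) * rb = ra * t + rb * (1 - t) by ring,
          Real.rpow_add (hApos i), Real.rpow_add hBi,
          Real.rpow_mul (hApos i).le, Real.rpow_mul (hApos i).le,
          Real.rpow_mul hBi.le, Real.rpow_mul hBi.le,
          Real.mul_rpow (Real.rpow_nonneg (hApos i).le a) (Real.rpow_nonneg hBi.le ra),
          Real.mul_rpow (Real.rpow_nonneg (hApos i).le b) (Real.rpow_nonneg hBi.le rb)]
        ring
  obtain ⟨ra, hra⟩ := hane
  obtain ⟨rb, hrb⟩ := hbne
  have hne : (P (t * a + (1 - t) * b)).Nonempty := ⟨_, key ra rb hra hrb⟩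
  have hbdd : ∀ s, BddBelow (P s) := by
    intro s
    refine ⟨0, fun x hx => ?_⟩
    rw [hP] at hx; exact hx.1.le
  refine ⟨hne, ?_⟩
  refine le_of_forall_pos_le_add fun ε hε => ?_
  obtain ⟨ra', hra', hralt⟩ := Real.lt_sInf_add_pos ⟨ra, hra⟩ (half_pos hε)
  obtain ⟨rb', hrb', hrblt⟩ := Real.lt_sInf_add_pos ⟨rb, hrb⟩ (half_pos hε)
  have h1 : sInf (P (t * a + (1 - t) * b)) ≤ t * ra' + (1 - t) * rb' :=
    csInf_le (hbdd _) (key ra' rb' hra' hrb')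
  have h2 : t * ra' ≤ t * (sInf (P a) + ε / 2) :=
    mul_le_mul_of_nonneg_left hralt.le ht0
  have h3 : (1 - t) * rb' ≤ (1 - t) * (sInf (P b) + ε / 2) :=
    mul_le_mul_of_nonneg_left hrblt.le ht1'
  nlinarith
end

section
/- Let ρ : V → V' be a surjection with finite fibers between countable sets, and for h : V → ℝ define (Eh)(x) = (1/|ρ^{-1}(ρ(x))|) ∑_{y ∈ ρ^{-1}(ρ(x))} h(y). Suppose G is a graph on V, G' a graph on V', such that ρ maps edges to edges and for each edge σ' = [x', y'] of G', the edge-fiber ρ^{-1}(σ') partitions as: |ρ^{-1}(σ')| = |ρ^{-1}(x')| · (number of lifted edges through each lift of x'), with this count independent of the chosen lift, and symmetrically for y'. Then for any edge σ = [x,y] of G, d(Eh)(σ) := Eh(x) − Eh(y) equals the average of dh over the edge-fiber: d(Eh)(σ) = (1/|ρ^{-1}(ρ(σ))|) ∑_{[u,v] ∈ ρ^{-1}(ρ(σ))} (h(u) − h(v)). -/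
open Classical in
lemma aux_count {V : Type*} (S : Set (V × V)) (hS : S.Finite) (u : V) :
    {v | (u, v) ∈ S}.ncard = (hS.toFinset.filter (fun e : V × V => e.1 = u)).card := by
  rw [← Set.ncard_coe_finset]
  have himg : (↑(hS.toFinset.filter (fun e : V × V => e.1 = u)) : Set (V × V))
      = (fun v => (u, v)) '' {v | (u, v) ∈ S} := by
    ext e
    simp only [Finset.coe_filter, Set.mem_setOf_eq, Set.Finite.mem_toFinset, Set.mem_image]
    constructor
    · rintro ⟨he, h1⟩
      have h2 : (u, e.2) = e := by rw [← h1]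
      exact ⟨e.2, by rw [h2]; exact he, h2⟩
    · rintro ⟨v, hv, rfl⟩; exact ⟨hv, rfl⟩
  rw [himg, Set.ncard_image_of_injective _ (fun a b hab => by simpa using hab)]

open Classical in
lemma aux_sum {V V' : Type*} (ρ : V → V') (S : Set (V × V)) (hS : S.Finite)
    (x' : V') (hA : (ρ ⁻¹' {x'}).Finite)
    (hsub : ∀ e ∈ S, ρ e.1 = x')
    (k : ℕ) (hk : ∀ u, ρ u = x' → {v | (u, v) ∈ S}.ncard = k)
    (h : V → ℝ) :
    ∑ e ∈ hS.toFinset, h e.1 = k * ∑ u ∈ hA.toFinset, h u := by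
  rw [← Finset.sum_fiberwise_of_maps_to (g := Prod.fst) (t := hA.toFinset)
      (fun e he => by
        simp only [Set.Finite.mem_toFinset, Set.mem_preimage, Set.mem_singleton_iff] at he ⊢
        exact hsub e he)]
  rw [Finset.mul_sum]
  refine Finset.sum_congr rfl fun u hu => ?_
  simp only [Set.Finite.mem_toFinset, Set.mem_preimage, Set.mem_singleton_iff] at hu
  have hcard : (hS.toFinset.filter (fun e : V × V => e.1 = u)).card = k := by
    rw [← aux_count S hS u]; exact hk u hu
  calc ∑ e ∈ hS.toFinset.filter (fun e : V × V => e.1 = u), h e.1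
      = ∑ _e ∈ hS.toFinset.filter (fun e : V × V => e.1 = u), h u :=
        Finset.sum_congr rfl fun e he => by
          rw [(Finset.mem_filter.mp he).2]
    _ = k * h u := by rw [Finset.sum_const, hcard, nsmul_eq_mul]

open Classical in
lemma aux_count₂ {V : Type*} (S : Set (V × V)) (hS : S.Finite) (v : V) :
    {u | (u, v) ∈ S}.ncard = (hS.toFinset.filter (fun e : V × V => e.2 = v)).card := by
  rw [← Set.ncard_coe_finset]
  have himg : (↑(hS.toFinset.filter (fun e : V × V => e.2 = v)) : Set (V × V))
      = (fun u => (u, v)) '' {u | (u, v) ∈ S} := by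
    ext e
    simp only [Finset.coe_filter, Set.mem_setOf_eq, Set.Finite.mem_toFinset, Set.mem_image]
    constructor
    · rintro ⟨he, h1⟩
      have h2 : (e.1, v) = e := by rw [← h1]
      exact ⟨e.1, by rw [h2]; exact he, h2⟩
    · rintro ⟨u, hu, rfl⟩; exact ⟨hu, rfl⟩
  rw [himg, Set.ncard_image_of_injective _ (fun a b hab => by simpa using hab)]

open Classical in
lemma aux_sum₂ {V V' : Type*} (ρ : V → V') (S : Set (V × V)) (hS : S.Finite)
    (y' : V') (hB : (ρ ⁻¹' {y'}).Finite)
    (hsub : ∀ e ∈ S, ρ e.2 = y')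
    (k : ℕ) (hk : ∀ v, ρ v = y' → {u | (u, v) ∈ S}.ncard = k)
    (h : V → ℝ) :
    ∑ e ∈ hS.toFinset, h e.2 = k * ∑ v ∈ hB.toFinset, h v := by
  rw [← Finset.sum_fiberwise_of_maps_to (g := Prod.snd) (t := hB.toFinset)
      (fun e he => by
        simp only [Set.Finite.mem_toFinset, Set.mem_preimage, Set.mem_singleton_iff] at he ⊢
        exact hsub e he)]
  rw [Finset.mul_sum]
  refine Finset.sum_congr rfl fun v hv => ?_
  simp only [Set.Finite.mem_toFinset, Set.mem_preimage, Set.mem_singleton_iff] at hv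
  have hcard : (hS.toFinset.filter (fun e : V × V => e.2 = v)).card = k := by
    rw [← aux_count₂ S hS v]; exact hk v hv
  calc ∑ e ∈ hS.toFinset.filter (fun e : V × V => e.2 = v), h e.2
      = ∑ _e ∈ hS.toFinset.filter (fun e : V × V => e.2 = v), h v :=
        Finset.sum_congr rfl fun e he => by
          rw [(Finset.mem_filter.mp he).2]
    _ = k * h v := by rw [Finset.sum_const, hcard, nsmul_eq_mul]



/-- Commutation of the averaging operator `E = ρ*ρ_*` with the simplicial coboundary
(final lemma of Section 5.3): under the regularity hypothesis on edge-fibers, for any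
edge `(x,y)` one has `Eh(x) - Eh(y) = (1/|ρ⁻¹(ρσ)|) ∑_{(u,v) ∈ ρ⁻¹(ρσ)} (h(u) - h(v))`. -/
theorem stmt9 {V V' : Type*} [Countable V] [Countable V']
    (ρ : V → V') (hρ : Function.Surjective ρ)
    (hfib : ∀ x' : V', (ρ ⁻¹' {x'}).Finite)
    (Edg : Set (V × V)) (Edg' : Set (V' × V'))
    (hmap : ∀ e ∈ Edg, (ρ e.1, ρ e.2) ∈ Edg')
    -- the edge-fiber of an edge `(x', y')` of `G'`
    (F : V' × V' → Set (V × V))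
    (hF : ∀ σ', F σ' = {e : V × V | e ∈ Edg ∧ ρ e.1 = σ'.1 ∧ ρ e.2 = σ'.2})
    (hFfin : ∀ σ', (F σ').Finite)
    -- regular thickness: the number of lifted edges through each lift of an endpoint
    -- is independent of the chosen lift
    (hreg₁ : ∀ σ' ∈ Edg', ∃ k : ℕ, (∀ u, ρ u = σ'.1 →
        {v : V | (u, v) ∈ F σ'}.ncard = k) ∧
        (F σ').ncard = (ρ ⁻¹' {σ'.1}).ncard * k)
    (hreg₂ : ∀ σ' ∈ Edg', ∃ k : ℕ, (∀ v, ρ v = σ'.2 →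
        {u : V | (u, v) ∈ F σ'}.ncard = k) ∧
        (F σ').ncard = (ρ ⁻¹' {σ'.2}).ncard * k)
    (h : V → ℝ) (Eh : V → ℝ)
    (hEh : ∀ x : V, Eh x = (((ρ ⁻¹' {ρ x}).ncard : ℝ))⁻¹ * ∑ᶠ y ∈ ρ ⁻¹' {ρ x}, h y) :
    ∀ σ ∈ Edg, Eh σ.1 - Eh σ.2 =
      (((F (ρ σ.1, ρ σ.2)).ncard : ℝ))⁻¹ *
        ∑ᶠ e ∈ F (ρ σ.1, ρ σ.2), (h e.1 - h e.2) := by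
  intro σ hσ
  have hσ' : (ρ σ.1, ρ σ.2) ∈ Edg' := hmap σ hσ
  obtain ⟨k₁, hk₁, hc₁⟩ := hreg₁ _ hσ'
  obtain ⟨k₂, hk₂, hc₂⟩ := hreg₂ _ hσ'
  have hFf := hFfin (ρ σ.1, ρ σ.2)
  have hA := hfib (ρ σ.1)
  have hB := hfib (ρ σ.2)
  have hσF : σ ∈ F (ρ σ.1, ρ σ.2) := by rw [hF]; exact ⟨hσ, rfl, rfl⟩
  have hFne : (F (ρ σ.1, ρ σ.2)).ncard ≠ 0 :=
    ((Set.ncard_pos hFf).2 ⟨σ, hσF⟩).ne'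
  have hAne : (ρ ⁻¹' {ρ σ.1}).ncard ≠ 0 := by
    intro h0; exact hFne (by rw [hc₁]; simp [h0])
  have hk₁ne : k₁ ≠ 0 := by
    intro h0; exact hFne (by rw [hc₁]; simp [h0])
  have hBne : (ρ ⁻¹' {ρ σ.2}).ncard ≠ 0 := by
    intro h0; exact hFne (by rw [hc₂]; simp [h0])
  have hk₂ne : k₂ ≠ 0 := by
    intro h0; exact hFne (by rw [hc₂]; simp [h0])
  -- convert finsums to Finset sums
  have eF : ∑ᶠ e ∈ F (ρ σ.1, ρ σ.2), (h e.1 - h e.2)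
      = ∑ e ∈ hFf.toFinset, (h e.1 - h e.2) := by
    exact finsum_mem_eq_finite_toFinset_sum _ hFf
  have eA : ∑ᶠ y ∈ ρ ⁻¹' {ρ σ.1}, h y = ∑ y ∈ hA.toFinset, h y := by
    exact finsum_mem_eq_finite_toFinset_sum _ hA
  have eB : ∑ᶠ y ∈ ρ ⁻¹' {ρ σ.2}, h y = ∑ y ∈ hB.toFinset, h y := by
    exact finsum_mem_eq_finite_toFinset_sum _ hB
  have hsub1 : ∀ e ∈ F (ρ σ.1, ρ σ.2), ρ e.1 = ρ σ.1 := by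
    intro e he; rw [hF] at he; exact he.2.1
  have hsub2 : ∀ e ∈ F (ρ σ.1, ρ σ.2), ρ e.2 = ρ σ.2 := by
    intro e he; rw [hF] at he; exact he.2.2
  have S1 := aux_sum ρ _ hFf (ρ σ.1) hA hsub1 k₁ hk₁ h
  have S2 := aux_sum₂ ρ _ hFf (ρ σ.2) hB hsub2 k₂ hk₂ h
  rw [hEh σ.1, hEh σ.2, eF, eA, eB, Finset.sum_sub_distrib, S1, S2]
  have hf1 : ((F (ρ σ.1, ρ σ.2)).ncard : ℝ) = ((ρ ⁻¹' {ρ σ.1}).ncard : ℝ) * k₁ := by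
    exact_mod_cast hc₁
  have hf2 : ((F (ρ σ.1, ρ σ.2)).ncard : ℝ) = ((ρ ⁻¹' {ρ σ.2}).ncard : ℝ) * k₂ := by
    exact_mod_cast hc₂
  have ha : ((ρ ⁻¹' {ρ σ.1}).ncard : ℝ) ≠ 0 := Nat.cast_ne_zero.mpr hAne
  have hb : ((ρ ⁻¹' {ρ σ.2}).ncard : ℝ) ≠ 0 := Nat.cast_ne_zero.mpr hBne
  have hk1 : (k₁ : ℝ) ≠ 0 := Nat.cast_ne_zero.mpr hk₁ne
  have hk2 : (k₂ : ℝ) ≠ 0 := Nat.cast_ne_zero.mpr hk₂ne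
  rw [mul_sub]
  congr 1
  · rw [hf1]; field_simp
  · rw [hf2]; field_simp
end
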